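/- Suppose vc(H_v) = 2, H_v has a vertex u of degree 3 which is of maximum degree in H_v, and H_v − u is a 3-star. If v has maximum degree in G and H_v has no degree-1 vertex in N(v) (in H_v − u after deleting u, every vertex of N(v) has degree ≠ 1), then a contradiction follows: the center of the 3-star must lie in N(v) with at least 3 neighbors in N²(v), violating the property that a vertex of N(v) with s neighbors in N²(v) has at least s neighbors in N(v). -/

import Mathlib

def IsClusterGraph {W : Type*} (H : SimpleGraph W) : Prop :=
  ∀ u w : W, H.Reachable u w → u ≠ w → H.Adj u w

def IsCDS {V : Type*} (G : SimpleGraph V) (S : Set V) : Prop :=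
  IsClusterGraph (G.induce {x | x ∉ S})

def IsVC {V : Type*} (H : SimpleGraph V) (X : Set V) : Prop :=
  ∀ u w : V, H.Adj u w → u ∈ X ∨ w ∈ X

/-- The auxiliary graph `H_v`: vertices of `V` carry it, but all edges lie inside
`N(v) ∪ N²(v)`. Between `N(v)` and `N²(v)` it has the edges of `G`; inside `N(v)`
it has the non-edges of `G`; `N²(v)` is independent. -/
def Hv {V : Type*} (G : SimpleGraph V) (v : V) : SimpleGraph V :=
  SimpleGraph.fromRel (fun u u' =>
    (G.Adj v u ∧ G.Adj v u' ∧ ¬ G.Adj u u') ∨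
    (G.Adj v u ∧ G.dist v u' = 2 ∧ G.Adj u u'))

/-- `v` together with all its twins (vertices with the same closed neighborhood). -/
def Twins {V : Type*} (G : SimpleGraph V) (v : V) : Set V :=
  {v' | insert v' (G.neighborSet v') = insert v (G.neighborSet v)}

/-- Delete a vertex `u` from `H` (keeping it as an isolated vertex). -/
def delVert {V : Type*} (H : SimpleGraph V) (u : V) : SimpleGraph V :=
  SimpleGraph.fromRel (fun a b => H.Adj a b ∧ a ≠ u ∧ b ≠ u)

/- The centre `c` of the star lies in `N(v)`: its leaves have degree 1 in `H_v − u`, so they are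
not in `N(v)`, hence they lie in `N²(v)` and are `G`-neighbours of `c`. Since `deg c ≤ deg v`,
a vertex of `N(v)` with `s` neighbours in `N²(v)` has at least `s` non-neighbours in `N(v)`,
i.e. at least `s` further `H_v`-neighbours. So `c` has `H_v`-degree at least `2 · 3 > 3`. -/

namespace SimpleGraph

variable {V : Type*}

lemma delVert_le (H : SimpleGraph V) (u : V) : delVert H u ≤ H := by
  intro x y h
  rw [delVert, fromRel_adj] at h
  rcases h with ⟨-, h | h⟩
  exacts [h.1, h.1.symm]

variable (G : SimpleGraph V) {v : V}

lemma adj_of_Hv_adj_of_not_adj {x y : V} (hvy : ¬ G.Adj v y) (h : (Hv G v).Adj x y) :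
    G.Adj v x ∧ G.dist v y = 2 ∧ G.Adj x y := by
  rw [Hv, fromRel_adj] at h
  rcases h with ⟨-, h | h⟩ <;> tauto

lemma Hv_neighborSet_inter_neighborSet {x : V} (hx : G.Adj v x) :
    (Hv G v).neighborSet x ∩ G.neighborSet v = G.neighborSet v \ insert x (G.neighborSet x) := by
  ext w
  simp only [Set.mem_inter_iff, Set.mem_sdiff, Set.mem_insert_iff, mem_neighborSet, Hv,
    fromRel_adj]
  have hdist : ∀ {y}, G.Adj v y → G.dist v y ≠ 2 := fun hy => by
    rw [(dist_eq_one_iff_adj).2 hy]; decide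
  constructor
  · rintro ⟨⟨hxw, (h | h) | (h | h)⟩, hw⟩
    · exact ⟨hw, by rintro (rfl | h'); exacts [hxw rfl, h.2.2 h']⟩
    · exact absurd h.2.1 (hdist hw)
    · exact ⟨hw, by rintro (rfl | h'); exacts [hxw rfl, h.2.2 h'.symm]⟩
    · exact absurd h.2.1 (hdist hx)
  · rintro ⟨hw, hxw⟩
    push Not at hxw
    exact ⟨⟨hxw.1.symm, Or.inl (Or.inl ⟨hx, hw, hxw.2⟩)⟩, hw⟩

variable [Fintype V]

lemma ncard_le_ncard_neighborSet_sdiff_of_maxDegree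
    (hmax : ∀ w : V, (G.neighborSet w).ncard ≤ (G.neighborSet v).ncard) {x : V}
    (hx : G.Adj v x) {T : Set V} (hTx : T ⊆ G.neighborSet x)
    (hTv : Disjoint T (insert v (G.neighborSet v))) :
    T.ncard ≤ (G.neighborSet v \ insert x (G.neighborSet x)).ncard := by
  set A := G.neighborSet x ∩ G.neighborSet v
  set D := G.neighborSet v \ insert x (G.neighborSet x)
  have hAT : Disjoint A T :=
    Set.disjoint_of_subset_left Set.inter_subset_right
      (hTv.symm.mono_left (Set.subset_insert _ _))
  have hvAT : v ∉ A ∪ T := by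
    rintro (hA | hT)
    · exact G.irrefl hA.2
    · exact Set.disjoint_left.1 hTv hT (Set.mem_insert _ _)
  have hx_lower : (A ∪ T).ncard + 1 ≤ (G.neighborSet x).ncard := by
    rw [← Set.ncard_insert_of_notMem hvAT]
    refine Set.ncard_le_ncard (Set.insert_subset hx.symm ?_)
    exact Set.union_subset Set.inter_subset_left hTx
  have hv_upper : (G.neighborSet v).ncard ≤ (A ∪ D).ncard + 1 := by
    refine (Set.ncard_le_ncard (t := insert x (A ∪ D)) ?_).trans (Set.ncard_insert_le _ _)
    intro w hw
    by_cases hwx : w = x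
    · exact Or.inl hwx
    by_cases hxw : G.Adj x w
    · exact Or.inr (Or.inl ⟨hxw, hw⟩)
    · exact Or.inr (Or.inr ⟨hw, by rintro (h | h); exacts [hwx h, hxw h]⟩)
  have := hmax x
  have := Set.ncard_union_le A D
  rw [Set.ncard_union_eq hAT] at hx_lower
  omega

lemma two_mul_ncard_le_ncard_Hv_neighborSet
    (hmax : ∀ w : V, (G.neighborSet w).ncard ≤ (G.neighborSet v).ncard) {x : V}
    (hx : G.Adj v x) {T : Set V} (hTx : T ⊆ (Hv G v).neighborSet x)
    (hTv : Disjoint T (G.neighborSet v)) :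
    2 * T.ncard ≤ ((Hv G v).neighborSet x).ncard := by
  have hT_out : ∀ t ∈ T, ¬ G.Adj v t := fun t ht => Set.disjoint_left.1 hTv ht
  have hTx' : T ⊆ G.neighborSet x := fun t ht =>
    (G.adj_of_Hv_adj_of_not_adj (hT_out t ht) (hTx ht)).2.2
  have hTv' : Disjoint T (insert v (G.neighborSet v)) := by
    refine Set.disjoint_insert_right.2 ⟨fun hvT => ?_, hTv⟩
    have := (G.adj_of_Hv_adj_of_not_adj (hT_out v hvT) (hTx hvT)).2.1
    rw [dist_self] at this
    exact absurd this (by decide)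
  have hsub : T ∪ (Hv G v).neighborSet x ∩ G.neighborSet v ⊆ (Hv G v).neighborSet x :=
    Set.union_subset hTx Set.inter_subset_left
  have hdisj : Disjoint T ((Hv G v).neighborSet x ∩ G.neighborSet v) :=
    hTv.mono_right Set.inter_subset_right
  have := Set.ncard_le_ncard hsub
  rw [Set.ncard_union_eq hdisj, G.Hv_neighborSet_inter_neighborSet hx] at this
  have := G.ncard_le_ncard_neighborSet_sdiff_of_maxDegree hmax hx hTx' hTv'
  omega

end SimpleGraph

open SimpleGraph in
theorem stmt11_general {V : Type*} [Fintype V] (G : SimpleGraph V) (v u c a b d : V)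
    (hmax : ∀ w : V, (G.neighborSet w).ncard ≤ (G.neighborSet v).ncard)
    (humax : ∀ w : V, ((Hv G v).neighborSet w).ncard ≤ 3)
    (hab : a ≠ b) (had : a ≠ d) (hbd : b ≠ d)
    (hstar : ∀ x y : V, (delVert (Hv G v) u).Adj x y ↔
      ((x = c ∧ (y = a ∨ y = b ∨ y = d)) ∨ (y = c ∧ (x = a ∨ x = b ∨ x = d))))
    (hdeg1 : ∀ x : V, G.Adj v x →
      ((delVert (Hv G v) u).neighborSet x).ncard ≠ 1) :
    False := by
  set T : Set V := {a, b, d}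
  have hcT : ∀ t ∈ T, (delVert (Hv G v) u).Adj c t := fun t ht =>
    (hstar c t).2 (Or.inl ⟨rfl, ht⟩)
  have hleaf : ∀ t ∈ T, (delVert (Hv G v) u).neighborSet t = {c} := fun t ht => by
    ext y
    simp only [mem_neighborSet, hstar, Set.mem_singleton_iff]
    have htc : t ≠ c := (hcT t ht).ne'
    constructor
    · rintro (⟨rfl, -⟩ | ⟨rfl, -⟩)
      exacts [absurd rfl htc, rfl]
    · rintro rfl
      exact Or.inr ⟨rfl, ht⟩
  have hTv : Disjoint T (G.neighborSet v) := Set.disjoint_left.2 fun t ht hvt =>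
    hdeg1 t hvt (by rw [hleaf t ht, Set.ncard_singleton])
  have hTc : T ⊆ (Hv G v).neighborSet c := fun t ht => delVert_le _ u (hcT t ht)
  have haT : a ∈ T := Set.mem_insert _ _
  have hvc : G.Adj v c := (G.adj_of_Hv_adj_of_not_adj (Set.disjoint_left.1 hTv haT) (hTc haT)).1
  have hT3 : T.ncard = 3 := Set.ncard_eq_three.2 ⟨a, b, d, hab, had, hbd, rfl⟩
  have := G.two_mul_ncard_le_ncard_Hv_neighborSet hmax hvc hTc hTv
  have := humax c
  omega

/-- Case 3 of the analysis cannot occur: if `v` has maximum degree in `G`,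
`vc(H_v) = 2`, `u` has maximum degree 3 in `H_v`, `H_v − u` is a 3-star (with
center `c` and leaves `a, b, d`), and no vertex of `N(v)` has degree 1 in
`H_v − u`, then we get a contradiction. -/
theorem stmt11 {V : Type*} [Fintype V] (G : SimpleGraph V) (v u c a b d : V)
    (hmax : ∀ w : V, (G.neighborSet w).ncard ≤ (G.neighborSet v).ncard)
    (hvc : sInf {n : ℕ | ∃ X : Set V, IsVC (Hv G v) X ∧ X.ncard = n} = 2)
    (hu3 : ((Hv G v).neighborSet u).ncard = 3)
    (humax : ∀ w : V, ((Hv G v).neighborSet w).ncard ≤ 3)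
    (hab : a ≠ b) (had : a ≠ d) (hbd : b ≠ d)
    (hstar : ∀ x y : V, (delVert (Hv G v) u).Adj x y ↔
      ((x = c ∧ (y = a ∨ y = b ∨ y = d)) ∨ (y = c ∧ (x = a ∨ x = b ∨ x = d))))
    (hdeg1 : ∀ x : V, G.Adj v x →
      ((delVert (Hv G v) u).neighborSet x).ncard ≠ 1) :
    False :=
  stmt11_general G v u c a b d hmax humax hab had hbd hstar hdeg1
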